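/- Let i < j be odd positive integers. In the graph on vertex set {0,1,...,j} with edges {a,b} whenever a + b ∈ {i,j} and a ≠ b, if a vertex lies on a path component then any vertex two edges away from it differs from it by exactly j − i; consequently, the length (number of vertices) of every connected component is either 2⌈(i+1)/(j−i)⌉ or 2⌈(i+1)/(j−i)⌉ + 2. -/

import Mathlib

/-!
Put `d = j - i`, an even positive number. Every edge `{a, b}` has `a + b ≡ i (mod d)`, so along
a walk the residue mod `d` alternates between `s` and `i - s`; these two classes are distinct
since `d` is even and `i` is odd. Conversely `v — (i - v) — (v + d)` and `v — (j - v)` are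
paths, so a component is exactly the union of two such residue classes. The reflection
`v ↦ j - v` swaps them, hence a component has `2 · #{v ≤ j | v ≡ s}` vertices; that count is
`⌊j/d⌋` or `⌊j/d⌋ + 1`, while `⌈(i + 1)/d⌉ = ⌊j/d⌋`.
-/

/-- The condition graph for the pair `(i, j)`: vertices are `0, 1, ..., j` and an edge
joins distinct `a, b` iff `a + b = i` or `a + b = j`. -/
def condGraph (i j : ℕ) : SimpleGraph (Fin (j + 1)) where
  Adj a b := a ≠ b ∧ (a.1 + b.1 = i ∨ a.1 + b.1 = j)
  symm := by
    constructor
    intro a b h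
    exact ⟨h.1.symm, by rw [Nat.add_comm]; exact h.2⟩
  loopless := ⟨fun a h => h.1 rfl⟩

theorem Nat.count_modEq_add_one_eq_or {r : ℕ} (hr : 0 < r) (b v : ℕ) :
    count (· ≡ v [MOD r]) (b + 1) = b / r ∨ count (· ≡ v [MOD r]) (b + 1) = b / r + 1 := by
  rw [count_modEq_card _ hr, Nat.succ_div]
  by_cases h : r ∣ b + 1
  · simp [h, Nat.mod_eq_zero_of_dvd h]
  · split_ifs <;> simp

theorem Fin.ncard_setOf_val_eq_count (n : ℕ) (p : ℕ → Prop) [DecidablePred p] :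
    {c : Fin n | p c}.ncard = Nat.count p n := by
  rw [Nat.count_eq_card_filter_range, ← Nat.Iio_eq_range, ← Fin.map_valEmbedding_univ,
    Finset.filter_map, Finset.card_map, ← Set.ncard_coe_finset]
  simp

theorem ZMod.natCast_eq_of_le {i j : ℕ} (hij : i ≤ j) : (j : ZMod (j - i)) = i :=
  (ZMod.natCast_eq_natCast_iff _ _ _).2 (Nat.modEq_sub hij)

theorem ZMod.natCast_ne_two_mul {d i : ℕ} (hd : Even d) (hi : Odd i) (x : ZMod d) :
    (i : ZMod d) ≠ 2 * x := by
  intro h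
  have h2 := congrArg (ZMod.castHom (even_iff_two_dvd.1 hd) (ZMod 2)) h
  rw [map_natCast, map_mul, map_ofNat, show (2 : ZMod 2) = 0 from rfl, zero_mul,
    ZMod.natCast_eq_zero_iff_even] at h2
  exact Nat.not_even_iff_odd.2 hi h2

section condGraph

variable {i j : ℕ}

theorem condGraph_adj_of_add_eq {a b : Fin (j + 1)} (hab : a.1 + b.1 = i ∨ a.1 + b.1 = j)
    (hodd : Odd (a.1 + b.1)) : (condGraph i j).Adj a b :=
  ⟨fun h => by subst h; exact Nat.not_even_iff_odd.2 hodd ⟨a.1, rfl⟩, hab⟩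

theorem condGraph_adj_rev (hj : Odd j) (c : Fin (j + 1)) : (condGraph i j).Adj c c.rev := by
  have hsum : c.1 + c.rev.1 = j := by rw [Fin.val_rev]; omega
  exact condGraph_adj_of_add_eq (.inr hsum) (by rwa [hsum])

theorem condGraph_val_add_sub_eq_or_of_adj_of_adj (hij : i ≤ j) {a b c : Fin (j + 1)}
    (hab : (condGraph i j).Adj a b) (hbc : (condGraph i j).Adj b c) (hac : a ≠ c) :
    a.1 + (j - i) = c.1 ∨ c.1 + (j - i) = a.1 := by
  have hac' : a.1 ≠ c.1 := Fin.val_ne_of_ne hac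
  rcases hab.2 with h1 | h1 <;> rcases hbc.2 with h2 | h2 <;> omega

theorem condGraph_cast_add_of_adj (hij : i ≤ j) {a b : Fin (j + 1)}
    (h : (condGraph i j).Adj a b) : (a.1 + b.1 : ZMod (j - i)) = i := by
  rw [← Nat.cast_add]
  rcases h.2 with h | h <;> simp [h, ZMod.natCast_eq_of_le hij]

theorem condGraph_cast_val_rev (hij : i ≤ j) (c : Fin (j + 1)) :
    (c.rev.1 : ZMod (j - i)) = i - c.1 := by
  rw [Fin.val_rev, show j + 1 - (c.1 + 1) = j - c.1 by omega, Nat.cast_sub (by omega),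
    ZMod.natCast_eq_of_le hij]

theorem condGraph_cast_of_reachable (hij : i ≤ j) {a c : Fin (j + 1)}
    (h : (condGraph i j).Reachable a c) :
    (c.1 : ZMod (j - i)) = a.1 ∨ (c.1 : ZMod (j - i)) = i - a.1 := by
  obtain ⟨w⟩ := h
  induction w with
  | nil => exact .inl rfl
  | cons hab _ ih =>
    have hsum := condGraph_cast_add_of_adj hij hab
    rcases ih with h | h <;> rw [h]
    · exact .inr (by linear_combination hsum)
    · exact .inl (by linear_combination -hsum)

theorem condGraph_reachable_of_val_eq_add (hi : Odd i) (hj : Odd j) (hij : i ≤ j)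
    {v w : Fin (j + 1)} (h : w.1 = v.1 + (j - i)) : (condGraph i j).Reachable v w := by
  have hv : v.1 ≤ i := by omega
  let u : Fin (j + 1) := ⟨i - v.1, by omega⟩
  have hvu : v.1 + u.1 = i := Nat.add_sub_cancel' hv
  have huw : u.1 + w.1 = j := by simp only [u]; omega
  exact (condGraph_adj_of_add_eq (.inl hvu) (by rwa [hvu])).reachable.trans
    (condGraph_adj_of_add_eq (.inr huw) (by rwa [huw])).reachable

theorem condGraph_reachable_of_val_eq_add_mul (hi : Odd i) (hj : Odd j) (hij : i ≤ j)
    {v : Fin (j + 1)} (k : ℕ) {w : Fin (j + 1)} (h : w.1 = v.1 + (j - i) * k) :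
    (condGraph i j).Reachable v w := by
  induction k generalizing w with
  | zero => obtain rfl : w = v := Fin.ext (by simpa using h); rfl
  | succ k ih =>
    let u : Fin (j + 1) := ⟨v.1 + (j - i) * k, by rw [mul_add_one] at h; omega⟩
    exact (ih (w := u) rfl).trans
      (condGraph_reachable_of_val_eq_add hi hj hij (by simp only [u]; rw [h, mul_add_one]; ring))

theorem condGraph_reachable_of_cast_eq (hi : Odd i) (hj : Odd j) (hij : i ≤ j)
    {v w : Fin (j + 1)} (h : (v.1 : ZMod (j - i)) = w.1) : (condGraph i j).Reachable v w := by
  wlog hvw : v.1 ≤ w.1 generalizing v w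
  · exact (this h.symm (le_of_not_ge hvw)).symm
  obtain ⟨k, hk⟩ := (Nat.modEq_iff_dvd' hvw).1 ((ZMod.natCast_eq_natCast_iff _ _ _).1 h)
  exact condGraph_reachable_of_val_eq_add_mul hi hj hij k
    (by rw [Nat.eq_add_of_sub_eq hvw hk, add_comm])

theorem condGraph_reachable_iff (hi : Odd i) (hj : Odd j) (hij : i ≤ j) {a c : Fin (j + 1)} :
    (condGraph i j).Reachable a c ↔
      (c.1 : ZMod (j - i)) = a.1 ∨ (c.1 : ZMod (j - i)) = i - a.1 := by
  refine ⟨condGraph_cast_of_reachable hij, ?_⟩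
  rintro (h | h)
  · exact condGraph_reachable_of_cast_eq hi hj hij h.symm
  · have hrev : (a.1 : ZMod (j - i)) = c.rev.1 := by rw [condGraph_cast_val_rev hij, h]; ring
    exact (condGraph_reachable_of_cast_eq hi hj hij hrev).trans
      (condGraph_adj_rev hj c).symm.reachable

theorem condGraph_supp_connectedComponentMk (hi : Odd i) (hj : Odd j) (hij : i ≤ j)
    (a : Fin (j + 1)) :
    ((condGraph i j).connectedComponentMk a).supp =
      {c | (c.1 : ZMod (j - i)) = a.1} ∪ Fin.rev ⁻¹' {c | (c.1 : ZMod (j - i)) = a.1} := by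
  ext c
  rw [SimpleGraph.ConnectedComponent.mem_supp_iff, SimpleGraph.ConnectedComponent.eq,
    SimpleGraph.reachable_comm, condGraph_reachable_iff hi hj hij]
  simp only [Set.mem_union, Set.mem_ofPred_eq, Set.mem_preimage, condGraph_cast_val_rev hij]
  exact or_congr_right ⟨fun h => by rw [h]; ring, fun h => by rw [← h]; ring⟩

theorem condGraph_card_supp_connectedComponentMk (hi : Odd i) (hj : Odd j) (hij : i ≤ j)
    (a : Fin (j + 1)) :
    Nat.card ((condGraph i j).connectedComponentMk a).supp =
      2 * Nat.count (· ≡ a.1 [MOD j - i]) (j + 1) := by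
  set S : Set (Fin (j + 1)) := {c | (c.1 : ZMod (j - i)) = a.1}
  have hdisj : Disjoint S (Fin.rev ⁻¹' S) := by
    refine Set.disjoint_left.2 fun c hc hrc => ?_
    simp only [S, Set.mem_preimage, Set.mem_ofPred_eq, condGraph_cast_val_rev hij] at hc hrc
    exact ZMod.natCast_ne_two_mul (Nat.Odd.sub_odd hj hi) hi a.1
      (by linear_combination hrc + hc)
  have hS : S.ncard = Nat.count (· ≡ a.1 [MOD j - i]) (j + 1) := by
    simp only [S, ZMod.natCast_eq_natCast_iff]
    exact Fin.ncard_setOf_val_eq_count _ (· ≡ a.1 [MOD j - i])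
  rw [condGraph_supp_connectedComponentMk hi hj hij, Nat.card_coe_set_eq,
    Set.ncard_union_eq hdisj, Set.ncard_preimage_of_injective_subset_range Fin.rev_injective
      (Fin.rev_surjective.range_eq ▸ Set.subset_univ S), hS, two_mul]

end condGraph

theorem condGraph_component_lengths_general (i j : ℕ) (hi : Odd i) (hj : Odd j) (hij : i < j) :
    (∀ a b c : Fin (j + 1), (condGraph i j).Adj a b → (condGraph i j).Adj b c → a ≠ c →
      a.1 + (j - i) = c.1 ∨ c.1 + (j - i) = a.1) ∧
    (∀ K : (condGraph i j).ConnectedComponent,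
      Nat.card K.supp = 2 * ((i + 1 + (j - i) - 1) / (j - i)) ∨
      Nat.card K.supp = 2 * ((i + 1 + (j - i) - 1) / (j - i)) + 2) := by
  refine ⟨fun a b c => condGraph_val_add_sub_eq_or_of_adj_of_adj hij.le, fun K => ?_⟩
  rw [show i + 1 + (j - i) - 1 = j by omega]
  induction K using SimpleGraph.ConnectedComponent.ind with
  | h a =>
    rw [condGraph_card_supp_connectedComponentMk hi hj hij.le]
    rcases Nat.count_modEq_add_one_eq_or (Nat.sub_pos_of_lt hij) j a with h | h <;> rw [h] <;>
      omega

/-- For odd positive `i < j`: in the condition graph, any vertex two edges away from a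
given vertex differs from it by exactly `j - i`; consequently, the number of vertices of
every connected component is either `2⌈(i+1)/(j-i)⌉` or `2⌈(i+1)/(j-i)⌉ + 2`. -/
theorem condGraph_component_lengths (i j : ℕ) (hi : Odd i) (hj : Odd j) (h0 : 0 < i)
    (hij : i < j) :
    (∀ a b c : Fin (j + 1), (condGraph i j).Adj a b → (condGraph i j).Adj b c → a ≠ c →
      a.1 + (j - i) = c.1 ∨ c.1 + (j - i) = a.1) ∧
    (∀ K : (condGraph i j).ConnectedComponent,
      Nat.card K.supp = 2 * ((i + 1 + (j - i) - 1) / (j - i)) ∨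
      Nat.card K.supp = 2 * ((i + 1 + (j - i) - 1) / (j - i)) + 2) :=
  condGraph_component_lengths_general i j hi hj hij
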